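/- If (x_n) is a statistically order bounded sequence in a Banach lattice E and x_n →^{st-un} x, then x_n is statistically norm convergent to x. -/

import Mathlib

open scoped Classical

/-- `K ⊆ ℕ` has natural density `a`. -/
def NatDensity (K : Set ℕ) (a : ℝ) : Prop :=
  Filter.Tendsto (fun n => (((Finset.range n).filter (fun k => k ∈ K)).card : ℝ) / n)
    Filter.atTop (nhds a)

variable {E : Type*} [NormedAddCommGroup E] [Lattice E] [HasSolidNorm E]
  [IsOrderedAddMonoid E] [NormedSpace ℝ E]
  [PosSMulMono ℝ E] [CompleteSpace E]

/-- `x` is statistically unbounded norm convergent to `l`. -/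
def StUNConv (x : ℕ → E) (l : E) : Prop :=
  ∀ ε : ℝ, 0 < ε → ∀ u : E, 0 ≤ u → NatDensity {n | ε ≤ ‖|x n - l| ⊓ u‖} 0

/-- `x` is unbounded norm convergent to `l`. -/
def UNConv (x : ℕ → E) (l : E) : Prop :=
  ∀ u : E, 0 ≤ u → Filter.Tendsto (fun n => ‖|x n - l| ⊓ u‖) Filter.atTop (nhds 0)

/-- `x` is statistically norm convergent to `l`. -/
def StNormConv (x : ℕ → E) (l : E) : Prop :=
  ∀ ε : ℝ, 0 < ε → NatDensity {n | ε ≤ ‖x n - l‖} 0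

lemma natDensity_zero_mono {A B : Set ℕ} (h : A ⊆ B) (hB : NatDensity B 0) :
    NatDensity A 0 := by
  refine tendsto_of_tendsto_of_tendsto_of_le_of_le tendsto_const_nhds hB
    (fun n => by positivity) (fun n => ?_)
  gcongr

lemma natDensity_zero_union {A B : Set ℕ} (hA : NatDensity A 0) (hB : NatDensity B 0) :
    NatDensity (A ∪ B) 0 := by
  have h0 : Filter.Tendsto
      (fun n => (((Finset.range n).filter (fun k => k ∈ A)).card : ℝ) / n
        + (((Finset.range n).filter (fun k => k ∈ B)).card : ℝ) / n)
      Filter.atTop (nhds 0) := by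
    simpa using hA.add hB
  refine tendsto_of_tendsto_of_tendsto_of_le_of_le tendsto_const_nhds h0
    (fun n => by positivity) (fun n => ?_)
  rw [← add_div]
  gcongr
  norm_cast
  apply Nat.cast_le.mpr
  refine le_trans (Finset.card_le_card
    (t := (Finset.range n).filter (fun k => k ∈ A) ∪ (Finset.range n).filter (fun k => k ∈ B))
    (fun k hk => ?_)) (Finset.card_union_le _ _)
  simp only [Finset.mem_filter, Set.mem_union] at hk
  rcases hk.2 with h | h <;>
    simp [Finset.mem_union, Finset.mem_filter, hk.1, h]

/-- A statistically order bounded st-un-convergent sequence is statistically norm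
convergent. -/
theorem statOrderBounded_stun_imp_stnorm (x : ℕ → E) (l : E)
    (hb : ∃ u : E, 0 ≤ u ∧ NatDensity {n | ¬ |x n| ≤ u} 0)
    (hx : StUNConv x l) : StNormConv x l := by
  obtain ⟨u, hu, hK⟩ := hb
  intro ε hε
  set v : E := u + |l| with hv_def
  have hv : 0 ≤ v := add_nonneg hu (abs_nonneg l)
  have hsub : {n | ε ≤ ‖x n - l‖} ⊆
      {n | ¬ |x n| ≤ u} ∪ {n | ε ≤ ‖|x n - l| ⊓ v‖} := by
    intro n hn
    by_cases hnb : |x n| ≤ u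
    · right
      have h1 : |x n - l| ≤ v := by
        calc |x n - l| = |x n + (-l)| := by rw [sub_eq_add_neg]
        _ ≤ |x n| + |(-l)| := abs_add_le _ _
        _ = |x n| + |l| := by rw [abs_neg]
        _ ≤ u + |l| := add_le_add_left hnb _
      have : |x n - l| ⊓ v = |x n - l| := inf_eq_left.mpr h1
      simpa [Set.mem_setOf_eq, this, norm_abs_eq_norm] using hn
    · left; exact hnb
  exact natDensity_zero_mono hsub (natDensity_zero_union hK (hx ε hε v hv))
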